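/- arXiv:1103.4741 — 2 statements merged into one kernel-verified Lean document; each statement's English description precedes it below -/
import Mathlib

section
/- Fix matrices Y ∈ ℝ^{n×m} and M ∈ ℝ^{n×m}, and suppose the set S of Kirchhoff matrices A with Y·A = M is nonempty. Then there exists a matrix A* ∈ S such that for every A ∈ S and every off-diagonal position (i,j), A_{ij} > 0 implies A*_{ij} > 0; i.e., the set of possible edge-support patterns has a unique maximal element (the dense realization structure is unique and contains all others). -/
/-- An `m × m` real matrix is a Kirchhoff matrix: nonnegative off-diagonal
entries, nonpositive diagonal entries, and zero column sums. -/
def IsKirchhoff {m : ℕ} (A : Matrix (Fin m) (Fin m) ℝ) : Prop :=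
  (∀ i j, i ≠ j → 0 ≤ A i j) ∧ (∀ i, A i i ≤ 0) ∧ (∀ j, ∑ i, A i j = 0)

/-- Among all Kirchhoff matrices realizing `M` with complex matrix `Y` there is
one whose support contains the support of every other: the structure of the
dense realization is unique and contains all other realizations. -/
theorem dense_realization_exists {n m : ℕ}
    (Y : Matrix (Fin n) (Fin m) ℝ) (M : Matrix (Fin n) (Fin m) ℝ)
    (hne : ∃ A : Matrix (Fin m) (Fin m) ℝ, IsKirchhoff A ∧ Y * A = M) :
    ∃ Astar : Matrix (Fin m) (Fin m) ℝ, (IsKirchhoff Astar ∧ Y * Astar = M) ∧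
      ∀ A : Matrix (Fin m) (Fin m) ℝ, IsKirchhoff A → Y * A = M →
        ∀ i j, i ≠ j → 0 < A i j → 0 < Astar i j := by
  classical
  obtain ⟨A₀, hA₀K, hA₀M⟩ := hne
  set Q : Fin m × Fin m → Prop :=
    fun p => ∃ A : Matrix (Fin m) (Fin m) ℝ,
      (IsKirchhoff A ∧ Y * A = M) ∧ 0 < A p.1 p.2 with hQ
  set B : Fin m × Fin m → Matrix (Fin m) (Fin m) ℝ :=
    fun p => if h : Q p then h.choose else A₀ with hB
  have hBK : ∀ p, IsKirchhoff (B p) ∧ Y * B p = M := by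
    intro p
    by_cases h : Q p
    · simp only [hB, dif_pos h]; exact h.choose_spec.1
    · simp only [hB, dif_neg h]; exact ⟨hA₀K, hA₀M⟩
  set k : ℕ := Fintype.card (Fin m × Fin m) with hk
  set c : ℝ := ((k : ℝ) + 1)⁻¹ with hc
  have hcpos : 0 < c := by positivity
  set T : Matrix (Fin m) (Fin m) ℝ := A₀ + ∑ p, B p with hT
  have hTentry : ∀ i j, T i j = A₀ i j + ∑ p, B p i j := by
    intro i j
    simp [hT, Matrix.add_apply, Matrix.sum_apply]
  refine ⟨c • T, ⟨⟨?_, ?_, ?_⟩, ?_⟩, ?_⟩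
  · intro i j hij
    have h0 := hA₀K.1 i j hij
    have hs : 0 ≤ ∑ p, B p i j :=
      Finset.sum_nonneg fun p _ => (hBK p).1.1 i j hij
    have : (0:ℝ) ≤ T i j := by rw [hTentry]; linarith
    simpa [Matrix.smul_apply, smul_eq_mul] using mul_nonneg hcpos.le this
  · intro i
    have h0 := hA₀K.2.1 i
    have hs : ∑ p, B p i i ≤ 0 :=
      Finset.sum_nonpos fun p _ => (hBK p).1.2.1 i
    have : T i i ≤ (0:ℝ) := by rw [hTentry]; linarith
    simpa [Matrix.smul_apply, smul_eq_mul] using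
      mul_nonpos_of_nonneg_of_nonpos hcpos.le this
  · intro j
    have : ∑ i, T i j = 0 := by
      simp only [hTentry]
      rw [Finset.sum_add_distrib, hA₀K.2.2 j, Finset.sum_comm]
      simp [(fun p => (hBK p).1.2.2 j)]
    simp [Matrix.smul_apply, smul_eq_mul, ← Finset.mul_sum, this]
  · have hYT : Y * T = ((k : ℝ) + 1) • M := by
      rw [hT, Matrix.mul_add, hA₀M, Matrix.mul_sum]
      have : ∀ p ∈ Finset.univ, Y * B p = M := fun p _ => (hBK p).2
      rw [Finset.sum_congr rfl this, Finset.sum_const, Finset.card_univ, ← hk]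
      rw [← Nat.cast_smul_eq_nsmul ℝ, add_smul, one_smul, add_comm]
    rw [Matrix.mul_smul, hYT, smul_smul, hc,
      inv_mul_cancel₀ (by positivity : ((k:ℝ)+1) ≠ 0), one_smul]
  · intro A hAK hAM i j hij hpos
    have hQij : Q (i, j) := ⟨A, ⟨hAK, hAM⟩, hpos⟩
    have hBij : 0 < B (i, j) i j := by
      simp only [hB, dif_pos hQij]
      exact hQij.choose_spec.2
    have hs : 0 < ∑ p, B p i j := by
      apply Finset.sum_pos'
      · exact fun p _ => (hBK p).1.1 i j hij
      · exact ⟨(i, j), Finset.mem_univ _, hBij⟩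
    have h0 := hA₀K.1 i j hij
    have : (0:ℝ) < T i j := by rw [hTentry]; linarith
    simpa [Matrix.smul_apply, smul_eq_mul] using mul_pos hcpos this
end

section
/- Let A be an m×m Kirchhoff matrix such that Y·A = M, and suppose the associated directed graph of A is weakly reversible. If A' is the dense realization (a Kirchhoff matrix with Y·A' = M whose support contains the support of every Kirchhoff matrix B with Y·B = M), then every edge of the graph of A lies within a single strongly connected component of the graph of A'. -/
/-!
Since `A` is itself a Kirchhoff realization of `M`, density puts its support inside that of `A'`,
so every path in the graph of `A` is a path in the graph of `A'`. An edge `j → i` of `A` gives a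
path from `j` to `i`, and weak reversibility of `A` a path back from `i` to `j`.
-/

theorem reflTransGen_mono_of_support_subset {ι : Type*} {A B : Matrix ι ι ℝ}
    (hAB : ∀ i j, i ≠ j → 0 < A i j → 0 < B i j) {u v : ι}
    (h : Relation.ReflTransGen (fun j i => j ≠ i ∧ 0 < A i j) u v) :
    Relation.ReflTransGen (fun p q => p ≠ q ∧ 0 < B q p) u v :=
  Relation.ReflTransGen.mono (fun _ _ hpq => ⟨hpq.1, hAB _ _ hpq.1.symm hpq.2⟩) u v h

theorem weaklyReversible_edges_in_dense_scc_general {n m : ℕ}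
    (Y : Matrix (Fin n) (Fin m) ℝ) (M : Matrix (Fin n) (Fin m) ℝ)
    (A A' : Matrix (Fin m) (Fin m) ℝ)
    (hA : IsKirchhoff A) (hAM : Y * A = M)
    (hWR : ∀ u v, Relation.ReflTransGen (fun j i => j ≠ i ∧ 0 < A i j) u v →
      Relation.ReflTransGen (fun j i => j ≠ i ∧ 0 < A i j) v u)
    (hdense : ∀ B : Matrix (Fin m) (Fin m) ℝ, IsKirchhoff B → Y * B = M →
      ∀ i j, i ≠ j → 0 < B i j → 0 < A' i j) :
    ∀ j i, (j ≠ i ∧ 0 < A i j) →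
      Relation.ReflTransGen (fun p q => p ≠ q ∧ 0 < A' q p) j i ∧
        Relation.ReflTransGen (fun p q => p ≠ q ∧ 0 < A' q p) i j := by
  intro j i hji
  have hsupp := hdense A hA hAM
  have hforward : Relation.ReflTransGen (fun j i => j ≠ i ∧ 0 < A i j) j i := .single hji
  exact ⟨reflTransGen_mono_of_support_subset hsupp hforward,
    reflTransGen_mono_of_support_subset hsupp (hWR j i hforward)⟩

/-- Every edge of a weakly reversible realization lies within a single strongly
connected component of the dense realization. -/
theorem weaklyReversible_edges_in_dense_scc {n m : ℕ}
    (Y : Matrix (Fin n) (Fin m) ℝ) (M : Matrix (Fin n) (Fin m) ℝ)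
    (A A' : Matrix (Fin m) (Fin m) ℝ)
    (hA : IsKirchhoff A) (hAM : Y * A = M)
    (hWR : ∀ u v, Relation.ReflTransGen (fun j i => j ≠ i ∧ 0 < A i j) u v →
      Relation.ReflTransGen (fun j i => j ≠ i ∧ 0 < A i j) v u)
    (hA' : IsKirchhoff A') (hA'M : Y * A' = M)
    (hdense : ∀ B : Matrix (Fin m) (Fin m) ℝ, IsKirchhoff B → Y * B = M →
      ∀ i j, i ≠ j → 0 < B i j → 0 < A' i j) :
    ∀ j i, (j ≠ i ∧ 0 < A i j) →
      Relation.ReflTransGen (fun p q => p ≠ q ∧ 0 < A' q p) j i ∧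
        Relation.ReflTransGen (fun p q => p ≠ q ∧ 0 < A' q p) i j :=
  weaklyReversible_edges_in_dense_scc_general Y M A A' hA hAM hWR hdense
end
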